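/- Let {𝒜_k}_{k≥1} be a sequence of patterns with widths m_k ≥ 3, and let n ≥ 1. If 𝒜_1, …, 𝒜_n are labyrinth patterns, then the set 𝒲_n of white squares of level n, regarded as an m(n)-pattern with m(n) = m_1⋯m_n, is a mixed labyrinth set, i.e., it satisfies properties (1), (2) and (3) of labyrinth patterns. -/

import Mathlib

open Set

namespace Labyrinth

/-- The closed square `S_{i,j,m} = [i/m,(i+1)/m] × [j/m,(j+1)/m]` of the `m × m` grid
on the unit square, indexed by `p = (i,j)`. -/
def cell (m : ℕ) (p : ℕ × ℕ) : Set (ℝ × ℝ) :=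
  Icc ((p.1 : ℝ) / (m : ℝ)) (((p.1 : ℝ) + 1) / (m : ℝ)) ×ˢ
    Icc ((p.2 : ℝ) / (m : ℝ)) (((p.2 : ℝ) + 1) / (m : ℝ))

/-- An `m`-pattern: a nonempty set of grid indices within the `m × m` grid. -/
def IsPattern (m : ℕ) (A : Set (ℕ × ℕ)) : Prop :=
  A.Nonempty ∧ ∀ p ∈ A, p.1 < m ∧ p.2 < m

/-- Two grid squares share a side. -/
def SideAdj (p q : ℕ × ℕ) : Prop :=
  (p.1 = q.1 ∧ (p.2 + 1 = q.2 ∨ q.2 + 1 = p.2)) ∨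
  (p.2 = q.2 ∧ (p.1 + 1 = q.1 ∨ q.1 + 1 = p.1))

/-- Two grid squares share a side or a corner. -/
def CornerAdj (p q : ℕ × ℕ) : Prop :=
  SideAdj p q ∨
  ((p.1 + 1 = q.1 ∨ q.1 + 1 = p.1) ∧ (p.2 + 1 = q.2 ∨ q.2 + 1 = p.2))

/-- The graph `𝒢(𝒜)` of a pattern: vertices are its squares, two squares being
adjacent iff they share a side. -/
def patternGraph (A : Set (ℕ × ℕ)) : SimpleGraph ↥A where
  Adj p q := SideAdj p.1 q.1
  symm := ⟨by
    rintro ⟨p, hp⟩ ⟨q, hq⟩ h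
    rcases h with ⟨h1, h2⟩ | ⟨h1, h2⟩
    · exact Or.inl ⟨h1.symm, h2.symm⟩
    · exact Or.inr ⟨h1.symm, h2.symm⟩⟩
  loopless := ⟨by
    rintro ⟨p, hp⟩ h
    rcases h with ⟨h1, h2 | h2⟩ | ⟨h1, h2 | h2⟩ <;> omega⟩

/-- The four sides of a square/pattern. -/
inductive Side | top | bottom | left | right
deriving DecidableEq

/-- `p` is an exit square of the `m`-pattern `A` on the given side. -/
def IsExitSq (m : ℕ) (A : Set (ℕ × ℕ)) : Side → ℕ × ℕ → Prop
  | .top, p => p ∈ A ∧ p.2 = m - 1 ∧ (p.1, 0) ∈ A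
  | .bottom, p => p ∈ A ∧ p.2 = 0 ∧ (p.1, m - 1) ∈ A
  | .left, p => p ∈ A ∧ p.1 = 0 ∧ (m - 1, p.2) ∈ A
  | .right, p => p ∈ A ∧ p.1 = m - 1 ∧ (0, p.2) ∈ A

/-- An `m × m`-labyrinth pattern: a nonempty `m`-pattern, `m ≥ 3`, whose graph is a tree,
with exactly one vertical and exactly one horizontal exit pair, and no two white squares
at diagonally opposite corners. -/
def IsLabyrinthPattern (m : ℕ) (A : Set (ℕ × ℕ)) : Prop :=
  3 ≤ m ∧ IsPattern m A ∧ (patternGraph A).IsTree ∧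
    (∃! i : ℕ, (i, m - 1) ∈ A ∧ (i, 0) ∈ A) ∧
    (∃! j : ℕ, (0, j) ∈ A ∧ (m - 1, j) ∈ A) ∧
    ((0, 0) ∈ A → (m - 1, m - 1) ∉ A) ∧
    ((m - 1, 0) ∈ A → (0, m - 1) ∉ A)

/-- A wild labyrinth pattern: the graph is merely connected, and there is at least one
vertical and at least one horizontal exit pair. -/
def IsWildLabyrinthPattern (m : ℕ) (A : Set (ℕ × ℕ)) : Prop :=
  3 ≤ m ∧ IsPattern m A ∧ (patternGraph A).Connected ∧
    (∃ i : ℕ, (i, m - 1) ∈ A ∧ (i, 0) ∈ A) ∧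
    (∃ j : ℕ, (0, j) ∈ A ∧ (m - 1, j) ∈ A) ∧
    ((0, 0) ∈ A → (m - 1, m - 1) ∉ A) ∧
    ((m - 1, 0) ∈ A → (0, m - 1) ∉ A)

/-- One substitution step: place a copy of the pattern `A'` (of width `m'`) into each
white square of `W`. -/
def subst (m' : ℕ) (A' W : Set (ℕ × ℕ)) : Set (ℕ × ℕ) :=
  {q | ∃ p ∈ W, ∃ r ∈ A', q = (p.1 * m' + r.1, p.2 * m' + r.2)}

/-- The white squares `𝒲_n` of level `n`; `whites m A n` is the paper's `𝒲_n`, where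
`A k` is the paper's pattern `𝒜_{k+1}` of width `m k = m_{k+1}`; level `0` is the whole
unit square. -/
def whites (m : ℕ → ℕ) (A : ℕ → Set (ℕ × ℕ)) : ℕ → Set (ℕ × ℕ)
  | 0 => {(0, 0)}
  | n + 1 => subst (m n) (A n) (whites m A n)

/-- `m(n) = m_1 ⋯ m_n`. -/
def mProd (m : ℕ → ℕ) (n : ℕ) : ℕ := ∏ k ∈ Finset.range n, m k

/-- The black squares `ℬ_n` of level `n`. -/
def blacks (m : ℕ → ℕ) (A : ℕ → Set (ℕ × ℕ)) (n : ℕ) : Set (ℕ × ℕ) :=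
  {p : ℕ × ℕ | p.1 < mProd m n ∧ p.2 < mProd m n} \ whites m A n

/-- A border square of the `m × m` grid. -/
def IsBorder (m : ℕ) (p : ℕ × ℕ) : Prop :=
  p.1 = 0 ∨ p.2 = 0 ∨ p.1 = m - 1 ∨ p.2 = m - 1

/-- `L_n`, the union of the white squares of level `n`. -/
def levelSet (m : ℕ → ℕ) (A : ℕ → Set (ℕ × ℕ)) (n : ℕ) : Set (ℝ × ℝ) :=
  ⋃ p ∈ whites m A n, cell (mProd m n) p

/-- `L_∞ = ⋂_{n ≥ 1} L_n` (the term `n = 0` is the whole unit square). -/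
def limitSet (m : ℕ → ℕ) (A : ℕ → Set (ℕ × ℕ)) : Set (ℝ × ℝ) :=
  ⋂ n, levelSet m A n

def unitSquare : Set (ℝ × ℝ) := Icc (0 : ℝ) 1 ×ˢ Icc (0 : ℝ) 1

/-- A path in a graph (with adjacency `Adj`, within the vertex set `A`)
from `u` to `v`: a nonempty list of distinct, consecutively adjacent squares of `A`,
starting at `u` and ending at `v`. -/
def IsPathIn (Adj : ℕ × ℕ → ℕ × ℕ → Prop) (A : Set (ℕ × ℕ))
    (l : List (ℕ × ℕ)) (u v : ℕ × ℕ) : Prop :=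
  l ≠ [] ∧ l.Nodup ∧ l.Chain' Adj ∧ (∀ p ∈ l, p ∈ A) ∧
    l.head? = some u ∧ l.getLast? = some v

/-- `s` is an arc between `a` and `b`: a homeomorphic image of `[0,1]`
with endpoints `a` and `b`. -/
def IsArc (s : Set (ℝ × ℝ)) (a b : ℝ × ℝ) : Prop :=
  ∃ f : ℝ → ℝ × ℝ, ContinuousOn f (Icc 0 1) ∧ InjOn f (Icc 0 1) ∧
    f '' Icc 0 1 = s ∧ f 0 = a ∧ f 1 = b

/-- `e` is the exit point of `L_∞` of the given type: for every `n ≥ 1` it lies in the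
exit square of that type of `𝒲_n`. -/
def IsExitPoint (m : ℕ → ℕ) (A : ℕ → Set (ℕ × ℕ)) (s : Side) (e : ℝ × ℝ) : Prop :=
  ∀ n, 1 ≤ n → ∃ p, IsExitSq (mProd m n) (whites m A n) s p ∧ e ∈ cell (mProd m n) p

/-- The (closed) edge of the grid square `p` of the `m × m` grid on the given side. -/
def cellEdge (m : ℕ) (p : ℕ × ℕ) : Side → Set (ℝ × ℝ)
  | .top => Icc ((p.1 : ℝ) / (m : ℝ)) (((p.1 : ℝ) + 1) / (m : ℝ)) ×ˢ {((p.2 : ℝ) + 1) / (m : ℝ)}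
  | .bottom => Icc ((p.1 : ℝ) / (m : ℝ)) (((p.1 : ℝ) + 1) / (m : ℝ)) ×ˢ {(p.2 : ℝ) / (m : ℝ)}
  | .left => {(p.1 : ℝ) / (m : ℝ)} ×ˢ Icc ((p.2 : ℝ) / (m : ℝ)) (((p.2 : ℝ) + 1) / (m : ℝ))
  | .right => {((p.1 : ℝ) + 1) / (m : ℝ)} ×ˢ Icc ((p.2 : ℝ) / (m : ℝ)) (((p.2 : ℝ) + 1) / (m : ℝ))

/-- Directions in the grid. -/
inductive Dir | up | down | left | right
deriving DecidableEq

/-- `stepDir p q d`: the square `q` is the neighbour of `p` in direction `d`. -/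
def stepDir (p q : ℕ × ℕ) : Dir → Prop
  | .up => q.1 = p.1 ∧ q.2 = p.2 + 1
  | .down => q.1 = p.1 ∧ p.2 = q.2 + 1
  | .left => q.2 = p.2 ∧ p.1 = q.1 + 1
  | .right => q.2 = p.2 ∧ q.1 = p.1 + 1

/-- The outward direction through a given side. -/
def outDir : Side → Dir
  | .top => .up
  | .bottom => .down
  | .left => .left
  | .right => .right

def sideOfDir : Dir → Side
  | .up => .top
  | .down => .bottom
  | .left => .left
  | .right => .right

/-- The six types `A, B, C, D, E, F` of paths (and of squares within a path). -/
inductive PTy | A | B | C | D | E | F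
deriving DecidableEq

instance : Fintype PTy where
  elems := {.A, .B, .C, .D, .E, .F}
  complete := by intro x; cases x <;> decide

/-- The exit at which the `x`-path starts: `A`: top→bottom, `B`: left→right,
`C`: top→right, `D`: right→bottom, `E`: bottom→left, `F`: left→top. -/
def startSide : PTy → Side
  | .A => .top
  | .B => .left
  | .C => .top
  | .D => .right
  | .E => .bottom
  | .F => .left

/-- The exit at which the `x`-path ends. -/
def endSide : PTy → Side
  | .A => .bottom
  | .B => .right
  | .C => .right
  | .D => .bottom
  | .E => .left
  | .F => .top

/-- The two neighbour directions characterising a square of each type. -/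
def ptyDirPair : PTy → Dir × Dir
  | .A => (.up, .down)
  | .B => (.left, .right)
  | .C => (.up, .right)
  | .D => (.right, .down)
  | .E => (.down, .left)
  | .F => (.left, .up)

def ptyDirs (τ : PTy) : Set Dir := {(ptyDirPair τ).1, (ptyDirPair τ).2}

/-- The set of directions from the `i`-th square of the path `l` towards its neighbours
within the path, where the first and last squares (exit squares) are regarded as having
an additional neighbour outside the unit square, in directions `dstart`, `dend`
respectively. -/
def pathDirs (l : List (ℕ × ℕ)) (dstart dend : Dir) (i : ℕ) : Set Dir :=
  {d | (∃ p q, l[i]? = some p ∧ l[i - 1]? = some q ∧ 0 < i ∧ stepDir p q d)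
    ∨ (∃ p q, l[i]? = some p ∧ l[i + 1]? = some q ∧ stepDir p q d)
    ∨ (i = 0 ∧ d = dstart)
    ∨ (i + 1 = l.length ∧ d = dend)}

/-- The number of `τ`-squares of the path `l` (with outward exit directions
`dstart`, `dend`). -/
noncomputable def countTy (l : List (ℕ × ℕ)) (dstart dend : Dir) (τ : PTy) : ℕ :=
  {i | i < l.length ∧ pathDirs l dstart dend i = ptyDirs τ}.ncard

/-- `M(n) = M_1 ⋅ M_2 ⋅ ⋯ ⋅ M_n`. -/
def matProd (M : ℕ → Matrix PTy PTy ℕ) (n : ℕ) : Matrix PTy PTy ℕ :=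
  ((List.range n).map M).prod

/-- A simple closed curve: a subspace homeomorphic to the circle. -/
def IsSimpleClosedCurve (s : Set (ℝ × ℝ)) : Prop :=
  Nonempty (↥s ≃ₜ AddCircle (1 : ℝ))

/-- The number of `δ`-mesh squares meeting `E`. -/
noncomputable def meshCount (δ : ℝ) (E : Set (ℝ × ℝ)) : ℕ :=
  {q : ℤ × ℤ | (E ∩ (Icc ((q.1 : ℝ) * δ) (((q.1 : ℝ) + 1) * δ) ×ˢ
      Icc ((q.2 : ℝ) * δ) (((q.2 : ℝ) + 1) * δ))).Nonempty}.ncard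

/-- The lower box-counting dimension of `E ⊆ ℝ²`. -/
noncomputable def lowerBoxDim (E : Set (ℝ × ℝ)) : ℝ :=
  Filter.liminf (fun δ : ℝ => Real.log (meshCount δ E) / (-Real.log δ)) (nhdsWithin 0 (Ioi 0))

/-- The upper box-counting dimension of `E ⊆ ℝ²`. -/
noncomputable def upperBoxDim (E : Set (ℝ × ℝ)) : ℝ :=
  Filter.limsup (fun δ : ℝ => Real.log (meshCount δ E) / (-Real.log δ)) (nhdsWithin 0 (Ioi 0))

end Labyrinth

/-!
Placing a copy of the pattern `𝒜` into every square of `𝒲` turns the graph of the new pattern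
into a replacement product: one copy of `𝒢(𝒜)` for every vertex of `𝒢(𝒲)`, and for every edge
of `𝒢(𝒲)` exactly one edge between the two copies, because adjacent copies can only be joined
through the unique exit pair of `𝒜` in that direction. When `𝒢(𝒜)` and `𝒢(𝒲)` are trees,
this graph is connected and has `|𝒲| (|𝒜| - 1) + (|𝒲| - 1)` edges, hence it is a tree. Exit
pairs and corner squares of the new pattern are read off blockwise, `q ↦ (q / m, q % m)`, from
those of `𝒲` and `𝒜`, and the theorem follows by induction on `n`.
-/

theorem ExistsUnique.exists_forall_iff_eq {α : Sort*} {P : α → Prop} (h : ∃! x, P x) :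
    ∃ x, ∀ y, P y ↔ y = x :=
  h.imp fun _ hx y => ⟨hx.2 y, fun e => e ▸ hx.1⟩

namespace SimpleGraph

variable {α β : Type*}

/-- `e p p'` is the vertex of the copy of `K` at `p` through which this copy is joined to the
copy at the `H`-neighbour `p'`. -/
def replacementProduct (H : SimpleGraph α) (K : SimpleGraph β) (e : α → α → β) :
    SimpleGraph (α × β) where
  Adj x y := (x.1 = y.1 ∧ K.Adj x.2 y.2) ∨ (H.Adj x.1 y.1 ∧ x.2 = e x.1 y.1 ∧ y.2 = e y.1 x.1)
  symm := ⟨fun _ _ h => h.imp (fun h => ⟨h.1.symm, h.2.symm⟩) fun h => ⟨h.1.symm, h.2.2, h.2.1⟩⟩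
  loopless := ⟨fun _ h => h.elim (fun h => K.loopless.irrefl _ h.2)
    fun h => H.loopless.irrefl _ h.1⟩

variable {H : SimpleGraph α} {K : SimpleGraph β} {e : α → α → β}

@[simp]
lemma replacementProduct_adj {x y : α × β} :
    (H.replacementProduct K e).Adj x y ↔
      (x.1 = y.1 ∧ K.Adj x.2 y.2) ∨ (H.Adj x.1 y.1 ∧ x.2 = e x.1 y.1 ∧ y.2 = e y.1 x.1) :=
  Iff.rfl

namespace replacementProduct

def copy (p : α) : K →g H.replacementProduct K e where
  toFun r := (p, r)
  map_rel' h := Or.inl ⟨rfl, h⟩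

lemma adj_of_adj {p p' : α} (h : H.Adj p p') :
    (H.replacementProduct K e).Adj (p, e p p') (p', e p' p) :=
  Or.inr ⟨h, rfl, rfl⟩

def crossEdge (z : H.edgeSet) : (H.replacementProduct K e).edgeSet :=
  ⟨Sym2.lift ⟨fun p p' => s((p, e p p'), (p', e p' p)), fun _ _ => Sym2.eq_swap⟩ z, by
    obtain ⟨z, hz⟩ := z
    induction z using Sym2.ind
    exact adj_of_adj hz⟩

end replacementProduct

open replacementProduct

theorem Preconnected.replacementProduct (hH : H.Preconnected) (hK : K.Preconnected) :
    (H.replacementProduct K e).Preconnected := by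
  rintro ⟨p, r⟩ ⟨q, s⟩
  obtain ⟨w⟩ := hH p q
  induction w generalizing r with
  | nil => exact (hK r s).map (copy _)
  | cons h _ ih => exact ((hK r _).map (copy _)).trans ((adj_of_adj h).reachable.trans (ih _))

theorem Connected.replacementProduct (hH : H.Connected) (hK : K.Connected) :
    (H.replacementProduct K e).Connected :=
  have := hH.nonempty
  have := hK.nonempty
  ⟨hH.preconnected.replacementProduct hK.preconnected⟩

theorem card_edgeSet_replacementProduct_le [Finite α] [Finite β] :
    Nat.card (H.replacementProduct K e).edgeSet ≤
      Nat.card α * Nat.card K.edgeSet + Nat.card H.edgeSet := by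
  rw [← Nat.card_prod, ← Nat.card_sum]
  refine Nat.card_le_card_of_surjective
    (Sum.elim (fun x => (copy x.1).mapEdgeSet x.2) crossEdge) ?_
  rintro ⟨z, hz⟩
  induction z using Sym2.ind with
  | h x y =>
    obtain ⟨p, r⟩ := x
    obtain ⟨p', r'⟩ := y
    rcases id hz with ⟨hpp, hr⟩ | ⟨hp, hr, hr'⟩
    · dsimp only at hpp hr
      subst hpp
      exact ⟨.inl (p, ⟨s(r, r'), hr⟩), rfl⟩
    · dsimp only at hr hr'
      subst hr hr'
      exact ⟨.inr ⟨s(p, p'), hp⟩, rfl⟩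

theorem IsTree.replacementProduct [Finite α] [Finite β] (hH : H.IsTree) (hK : K.IsTree) :
    (H.replacementProduct K e).IsTree := by
  have hconn : (H.replacementProduct K e).Connected :=
    hH.connected.replacementProduct hK.connected
  rw [isTree_iff_connected_and_card] at hH hK ⊢
  refine ⟨hconn, le_antisymm ?_ hconn.card_vert_le_card_edgeSet_add_one⟩
  calc Nat.card (H.replacementProduct K e).edgeSet + 1
      ≤ Nat.card α * Nat.card K.edgeSet + Nat.card H.edgeSet + 1 := by
        gcongr; exact card_edgeSet_replacementProduct_le
    _ = Nat.card (α × β) := by rw [Nat.card_prod, ← hK.2, ← hH.2]; ring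

end SimpleGraph

namespace Labyrinth

lemma div_mod_eq_iff {m i a b : ℕ} (hb : b < m) : i / m = a ∧ i % m = b ↔ i = a * m + b := by
  rw [Nat.div_mod_unique (by omega), mul_comm, add_comm]
  exact ⟨fun h => h.1.symm, fun h => ⟨h.symm, hb⟩⟩

lemma mul_add_eq_mul_add_iff {m a b c d : ℕ} (hb : b < m) (hd : d < m) :
    a * m + b = c * m + d ↔ a = c ∧ b = d := by
  rw [← div_mod_eq_iff hd, ((div_mod_eq_iff hb).2 rfl).1, ((div_mod_eq_iff hb).2 rfl).2]

lemma mul_add_add_one_eq_mul_add_iff {m a b c d : ℕ} (hb : b < m) (hd : d < m) :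
    a * m + b + 1 = c * m + d ↔ (a = c ∧ b + 1 = d) ∨ (a + 1 = c ∧ b = m - 1 ∧ d = 0) := by
  rcases Nat.lt_or_ge (b + 1) m with hb1 | hb1
  · rw [add_assoc, mul_add_eq_mul_add_iff hb1 hd]
    omega
  · have : a * m + b + 1 = (a + 1) * m + 0 := by rw [add_one_mul]; omega
    rw [this, mul_add_eq_mul_add_iff (by omega) hd]
    omega

lemma mul_sub_one_div_mod {M m : ℕ} (hM : 0 < M) (hm : 0 < m) :
    (M * m - 1) / m = M - 1 ∧ (M * m - 1) % m = m - 1 := by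
  rw [div_mod_eq_iff (by omega)]
  obtain ⟨M, rfl⟩ := Nat.exists_eq_add_one.2 hM
  rw [Nat.add_sub_cancel, add_one_mul]
  omega

lemma existsUnique_of_div_mod {m : ℕ} {P Q R : ℕ → Prop} (hP : ∀ i, P i ↔ Q (i / m) ∧ R (i % m))
    (hQ : ∃! a, Q a) (hR : ∃! b, R b) (hlt : ∀ b, R b → b < m) : ∃! i, P i := by
  simp only [hP]
  obtain ⟨a, ha, haQ⟩ := hQ
  obtain ⟨b, hb, hbR⟩ := hR
  have key := fun i => div_mod_eq_iff (i := i) (a := a) (hlt b hb)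
  refine ⟨a * m + b, ?_, fun i hi => (key i).1 ⟨haQ _ hi.1, hbR _ hi.2⟩⟩
  obtain ⟨h1, h2⟩ := (key _).2 rfl
  rw [h1, h2]
  exact ⟨ha, hb⟩

lemma IsPattern.finite {m : ℕ} {A : Set (ℕ × ℕ)} (h : IsPattern m A) : A.Finite :=
  ((finite_Iio m).prod (finite_Iio m)).subset fun p hp => h.2 p hp

def place (m' : ℕ) (p r : ℕ × ℕ) : ℕ × ℕ := (p.1 * m' + r.1, p.2 * m' + r.2)

section Subst

variable {m' iV jH : ℕ} {A' W : Set (ℕ × ℕ)}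

lemma place_div_mod {p r : ℕ × ℕ} (hr : r.1 < m' ∧ r.2 < m') :
    ((place m' p r).1 / m', (place m' p r).2 / m') = p ∧
      ((place m' p r).1 % m', (place m' p r).2 % m') = r := by
  obtain ⟨h1, h2⟩ := (div_mod_eq_iff hr.1).2 rfl
  obtain ⟨h3, h4⟩ := (div_mod_eq_iff hr.2).2 rfl
  exact ⟨Prod.ext h1 h3, Prod.ext h2 h4⟩

lemma place_div_mod_self (q : ℕ × ℕ) : place m' (q.1 / m', q.2 / m') (q.1 % m', q.2 % m') = q :=
  Prod.ext (Nat.div_add_mod' _ _) (Nat.div_add_mod' _ _)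

lemma mem_subst_iff (hA : ∀ r ∈ A', r.1 < m' ∧ r.2 < m') {q : ℕ × ℕ} :
    q ∈ subst m' A' W ↔ (q.1 / m', q.2 / m') ∈ W ∧ (q.1 % m', q.2 % m') ∈ A' := by
  constructor
  · rintro ⟨p, hp, r, hr, rfl⟩
    obtain ⟨h1, h2⟩ := place_div_mod (p := p) (hA r hr)
    exact ⟨(congrArg (· ∈ W) h1).mpr hp, (congrArg (· ∈ A') h2).mpr hr⟩
  · rintro ⟨hp, hr⟩
    exact ⟨_, hp, _, hr, (place_div_mod_self q).symm⟩

def substEquiv (hA : ∀ r ∈ A', r.1 < m' ∧ r.2 < m') : ↥W × ↥A' ≃ ↥(subst m' A' W) where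
  toFun x := ⟨place m' x.1 x.2, x.1, x.1.2, x.2, x.2.2, rfl⟩
  invFun q := (⟨_, ((mem_subst_iff hA).1 q.2).1⟩, ⟨_, ((mem_subst_iff hA).1 q.2).2⟩)
  left_inv := by
    rintro ⟨⟨p, hp⟩, ⟨r, hr⟩⟩
    obtain ⟨h1, h2⟩ := place_div_mod (p := p) (hA r hr)
    simp only [h1, h2]
  right_inv q := Subtype.ext (place_div_mod_self q.1)

theorem IsPattern.subst {M : ℕ} (hA : IsPattern m' A') (hW : IsPattern M W) :
    IsPattern (M * m') (subst m' A' W) := by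
  obtain ⟨⟨r, hr⟩, hAb⟩ := hA
  obtain ⟨⟨p, hp⟩, hWb⟩ := hW
  have hm : 0 < m' := Nat.zero_lt_of_lt (hAb r hr).1
  refine ⟨⟨_, p, hp, r, hr, rfl⟩, fun q hq => ?_⟩
  obtain ⟨h1, h2⟩ := hWb _ ((mem_subst_iff hAb).1 hq).1
  exact ⟨(Nat.div_lt_iff_lt_mul hm).1 h1, (Nat.div_lt_iff_lt_mul hm).1 h2⟩

/-- The square of the inner pattern at which the copy placed into `p` is joined to the copy
placed into the neighbouring square `p'`: an exit square of the unique vertical (`iV`) or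
horizontal (`jH`) exit pair. -/
def exitToward (m' iV jH : ℕ) (p p' : ℕ × ℕ) : ℕ × ℕ :=
  if p.1 = p'.1 then (iV, if p.2 < p'.2 then m' - 1 else 0)
  else (if p.1 < p'.1 then m' - 1 else 0, jH)

lemma sideAdj_place_of_sideAdj (p : ℕ × ℕ) {r r' : ℕ × ℕ} (h : SideAdj r r') :
    SideAdj (place m' p r) (place m' p r') := by
  unfold SideAdj place at *
  omega

lemma sideAdj_place_exitToward (hm : 0 < m') (iV jH : ℕ) {p p' : ℕ × ℕ} (h : SideAdj p p') :
    SideAdj (place m' p (exitToward m' iV jH p p')) (place m' p' (exitToward m' iV jH p' p)) := by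
  rcases h with ⟨h1, h2 | h2⟩ | ⟨h1, h2 | h2⟩ <;>
    simp only [SideAdj, place, exitToward, h1, ← h2, add_one_mul] <;> split_ifs <;> omega

lemma exitToward_mem (hV : ∀ i, (i, m' - 1) ∈ A' ∧ (i, 0) ∈ A' ↔ i = iV)
    (hH : ∀ j, (0, j) ∈ A' ∧ (m' - 1, j) ∈ A' ↔ j = jH) (p p' : ℕ × ℕ) :
    exitToward m' iV jH p p' ∈ A' := by
  unfold exitToward
  split_ifs
  exacts [((hV iV).2 rfl).1, ((hV iV).2 rfl).2, ((hH jH).2 rfl).2, ((hH jH).2 rfl).1]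

lemma sideAdj_place_iff (hA : ∀ r ∈ A', r.1 < m' ∧ r.2 < m')
    (hV : ∀ i, (i, m' - 1) ∈ A' ∧ (i, 0) ∈ A' ↔ i = iV)
    (hH : ∀ j, (0, j) ∈ A' ∧ (m' - 1, j) ∈ A' ↔ j = jH) {p p' r r' : ℕ × ℕ}
    (hr : r ∈ A') (hr' : r' ∈ A') :
    SideAdj (place m' p r) (place m' p' r') ↔ (p = p' ∧ SideAdj r r') ∨
      (SideAdj p p' ∧ r = exitToward m' iV jH p p' ∧ r' = exitToward m' iV jH p' p) := by
  constructor
  · obtain ⟨r1, r2⟩ := r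
    obtain ⟨s1, s2⟩ := r'
    obtain ⟨h1, h2⟩ := hA _ hr
    obtain ⟨h1', h2'⟩ := hA _ hr'
    -- Squares of two different copies can only share a side along the common side of their
    -- blocks, and then they form an exit pair of the inner pattern.
    have up : r2 = m' - 1 → s2 = 0 → r1 = s1 → r1 = iV := by
      rintro rfl rfl rfl; exact (hV _).1 ⟨hr, hr'⟩
    have down : r2 = 0 → s2 = m' - 1 → r1 = s1 → r1 = iV := by
      rintro rfl rfl rfl; exact (hV _).1 ⟨hr', hr⟩
    have right : r1 = m' - 1 → s1 = 0 → r2 = s2 → r2 = jH := by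
      rintro rfl rfl rfl; exact (hH _).1 ⟨hr', hr⟩
    have left : r1 = 0 → s1 = m' - 1 → r2 = s2 → r2 = jH := by
      rintro rfl rfl rfl; exact (hH _).1 ⟨hr, hr'⟩
    simp only [SideAdj, place, exitToward, Prod.ext_iff, mul_add_eq_mul_add_iff h1 h1',
      mul_add_eq_mul_add_iff h2 h2', mul_add_add_one_eq_mul_add_iff h1 h1',
      mul_add_add_one_eq_mul_add_iff h1' h1, mul_add_add_one_eq_mul_add_iff h2 h2',
      mul_add_add_one_eq_mul_add_iff h2' h2]
    rintro (⟨⟨e1, e2⟩, (⟨a, b⟩ | ⟨a, b, c⟩) | (⟨a, b⟩ | ⟨a, b, c⟩)⟩ |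
      ⟨⟨e1, e2⟩, (⟨a, b⟩ | ⟨a, b, c⟩) | (⟨a, b⟩ | ⟨a, b, c⟩)⟩) <;> split_ifs <;> omega
  · rintro (⟨rfl, h⟩ | ⟨h, rfl, rfl⟩)
    · exact sideAdj_place_of_sideAdj p h
    · exact sideAdj_place_exitToward (Nat.zero_lt_of_lt (hA _ hr).1) iV jH h

def substIso (hA : ∀ r ∈ A', r.1 < m' ∧ r.2 < m')
    (hV : ∀ i, (i, m' - 1) ∈ A' ∧ (i, 0) ∈ A' ↔ i = iV)
    (hH : ∀ j, (0, j) ∈ A' ∧ (m' - 1, j) ∈ A' ↔ j = jH) :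
    (patternGraph W).replacementProduct (patternGraph A')
      (fun p p' => ⟨exitToward m' iV jH p p', exitToward_mem hV hH p p'⟩) ≃g
      patternGraph (subst m' A' W) where
  toEquiv := substEquiv hA
  map_rel_iff' := by
    rintro ⟨⟨p, hp⟩, ⟨r, hr⟩⟩ ⟨⟨p', hp'⟩, ⟨r', hr'⟩⟩
    refine (sideAdj_place_iff hA hV hH hr hr').trans ?_
    simp only [SimpleGraph.replacementProduct_adj, Subtype.mk.injEq]
    rfl

theorem IsLabyrinthPattern.subst {M : ℕ} (hA : IsLabyrinthPattern m' A')
    (hW : IsLabyrinthPattern M W) : IsLabyrinthPattern (M * m') (subst m' A' W) := by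
  obtain ⟨hm3, hApat, hAtree, hAV, hAH, -, -⟩ := hA
  obtain ⟨hM3, hWpat, hWtree, hWV, hWH, hWc1, hWc2⟩ := hW
  have hAb := hApat.2
  have := hApat.finite.to_subtype
  have := hWpat.finite.to_subtype
  obtain ⟨hdiv, hmod⟩ := mul_sub_one_div_mod (M := M) (m := m') (by omega) (by omega)
  refine ⟨by nlinarith, hApat.subst hWpat, ?_, ?_, ?_, ?_, ?_⟩
  · obtain ⟨iV, hiV⟩ := hAV.exists_forall_iff_eq
    obtain ⟨jH, hjH⟩ := hAH.exists_forall_iff_eq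
    exact (substIso hAb hiV hjH).isTree_iff.1 (hWtree.replacementProduct hAtree)
  · refine existsUnique_of_div_mod (fun i => ?_) hWV hAV fun b hb => (hAb _ hb.1).1
    rw [mem_subst_iff hAb, mem_subst_iff hAb, hdiv, hmod, Nat.zero_div, Nat.zero_mod]
    exact and_and_and_comm
  · refine existsUnique_of_div_mod (fun j => ?_) hWH hAH fun b hb => (hAb _ hb.1).2
    rw [mem_subst_iff hAb, mem_subst_iff hAb, hdiv, hmod, Nat.zero_div, Nat.zero_mod]
    exact and_and_and_comm
  · simp only [mem_subst_iff hAb, hdiv, Nat.zero_div]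
    exact fun h0 h1 => hWc1 h0.1 h1.1
  · simp only [mem_subst_iff hAb, hdiv, Nat.zero_div]
    exact fun h0 h1 => hWc2 h0.1 h1.1

end Subst

lemma subst_singleton_zero {m' : ℕ} {A' : Set (ℕ × ℕ)} : subst m' A' {(0, 0)} = A' := by
  ext q
  constructor
  · rintro ⟨p, rfl, r, hr, rfl⟩
    simpa using hr
  · exact fun hq => ⟨(0, 0), rfl, q, hq, by simp⟩

end Labyrinth

open Labyrinth in
theorem whites_isLabyrinthPattern_general (m : ℕ → ℕ) (A : ℕ → Set (ℕ × ℕ))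
    (n : ℕ) (hn : 1 ≤ n) (hlab : ∀ k < n, IsLabyrinthPattern (m k) (A k)) :
    IsLabyrinthPattern (mProd m n) (whites m A n) := by
  induction n, hn using Nat.le_induction with
  | base => simpa [whites, mProd, subst_singleton_zero] using hlab 0 one_pos
  | succ n hn ih =>
    rw [whites, mProd, Finset.prod_range_succ]
    exact (hlab n n.lt_succ_self).subst (ih fun k hk => hlab k (by omega))

open Labyrinth in
/-- If `𝒜_1, …, 𝒜_n` are labyrinth patterns, then `𝒲_n`, regarded as an
`m(n)`-pattern, is a mixed labyrinth set, i.e. satisfies properties (1)–(3) of labyrinth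
patterns. -/
theorem whites_isLabyrinthPattern (m : ℕ → ℕ) (A : ℕ → Set (ℕ × ℕ))
    (hm : ∀ k, 3 ≤ m k) (hpat : ∀ k, IsPattern (m k) (A k))
    (n : ℕ) (hn : 1 ≤ n) (hlab : ∀ k < n, IsLabyrinthPattern (m k) (A k)) :
    IsLabyrinthPattern (mProd m n) (whites m A n) :=
  whites_isLabyrinthPattern_general m A n hn hlab
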